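/- The intersection of Py^{n+1} = {x ∈ [0,1]^{n+1} : x_j ≤ x_{n+1} ∀j} with the standard simplex S_n equals the set D_n[n+1] = {x ∈ S_n : x_j ≤ x_{n+1} for all j}, and this set equals the convex hull of the points p_J = (1/|J|) e_J over all subsets J ⊆ {1,...,n+1} containing n+1. -/

import Mathlib

/-! The set `D = {x ∈ S_n : x_j ≤ x_{n+1}}` is convex and contains every `p_J` with `n+1 ∈ J`.
Conversely, if `x ≥ 0` is maximal at the coordinate `i₀`, `J` is its support (so `i₀ ∈ J`) and `t`
is its smallest nonzero coordinate, then `x - t • e_J` is again nonnegative and maximal at `i₀`,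
with a smaller support. So `x` lies in the cone spanned by the `p_J` with `i₀ ∈ J`, and as the
coordinate sum is `1` at every `p_J`, a point of this cone with coordinate sum `1` is a convex
combination of them. -/

open Finset

theorem Finset.centroidWeightsIndicator_eq_ite {𝕜 ι : Type*} [DivisionRing 𝕜] [DecidableEq ι]
    (J : Finset ι) :
    J.centroidWeightsIndicator 𝕜 = fun j => if j ∈ J then (#J : 𝕜)⁻¹ else 0 := by
  ext j
  simp [centroidWeightsIndicator_def, Set.indicator_apply, centroidWeights_apply]

variable {𝕜 E ι : Type*} [Field 𝕜] [LinearOrder 𝕜] [IsStrictOrderedRing 𝕜]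

theorem mem_convexHull_of_mem_pointedConeHull [AddCommGroup E] [Module 𝕜 E] {s : Set E}
    {ℓ : E →ₗ[𝕜] 𝕜} (hs : ∀ v ∈ s, ℓ v = 1) {x : E} (hx : x ∈ PointedCone.hull 𝕜 s)
    (hℓx : ℓ x = 1) : x ∈ convexHull 𝕜 s := by
  obtain ⟨c, hcs, hc₀, rfl⟩ := PointedCone.mem_hull_set.1 hx
  have hc₁ : ∑ v ∈ c.support, c v = 1 := by
    rw [← hℓx, Finsupp.sum, map_sum]
    refine sum_congr rfl fun v hv => ?_
    rw [map_smul, hs v (hcs hv), smul_eq_mul, mul_one]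
  exact (convex_convexHull 𝕜 s).sum_mem (z := fun v => v) (fun v _ => hc₀ v) hc₁
    fun v hv => subset_convexHull 𝕜 s (hcs hv)

variable [Fintype ι]

variable (𝕜) in
def pyramidSimplex (i₀ : ι) : Set (ι → 𝕜) := stdSimplex 𝕜 ι ∩ {x | ∀ j, x j ≤ x i₀}

-- `J.centroidWeightsIndicator 𝕜` is the barycenter `p_J` of the face spanned by `J`.
variable (𝕜) in
def apexFaceBarycenters (i₀ : ι) : Set (ι → 𝕜) :=
  {p | ∃ J : Finset ι, i₀ ∈ J ∧ p = J.centroidWeightsIndicator 𝕜}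

theorem convex_pyramidSimplex (i₀ : ι) : Convex 𝕜 (pyramidSimplex 𝕜 i₀) := by
  refine (convex_stdSimplex 𝕜 ι).inter fun x hx y hy a b ha hb _ j => ?_
  simp only [Pi.add_apply, Pi.smul_apply, smul_eq_mul]
  gcongr
  exacts [hx j, hy j]

theorem centroidWeightsIndicator_mem_pyramidSimplex {i₀ : ι} {J : Finset ι} (hJ : i₀ ∈ J) :
    J.centroidWeightsIndicator 𝕜 ∈ pyramidSimplex 𝕜 i₀ := by
  classical
  refine ⟨⟨fun j => ?_, sum_centroidWeightsIndicator_eq_one_of_nonempty 𝕜 _ ⟨i₀, hJ⟩⟩, fun j => ?_⟩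
  · simp only [centroidWeightsIndicator_eq_ite]
    positivity
  · simp only [centroidWeightsIndicator_eq_ite, hJ, if_true]
    split_ifs
    exacts [le_rfl, by positivity]

theorem mem_pointedConeHull_apexFaceBarycenters {i₀ : ι} {x : ι → 𝕜} (hx₀ : ∀ j, 0 ≤ x j)
    (hmax : ∀ j, x j ≤ x i₀) : x ∈ PointedCone.hull 𝕜 (apexFaceBarycenters 𝕜 i₀) := by
  classical
  induction hk : #{j | x j ≠ 0} using Nat.strong_induction_on generalizing x with
  | _ k ih =>
  obtain ⟨J, hJ⟩ : ∃ J : Finset ι, J = ({j | x j ≠ 0} : Finset ι) := ⟨_, rfl⟩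
  have hmemJ : ∀ j, j ∈ J ↔ x j ≠ 0 := by simp [hJ]
  obtain hJ₀ | ⟨j₁, hj₁J, hj₁⟩ := J.eq_empty_or_nonempty.imp id (J.exists_min_image x)
  · have hx : x = 0 := funext fun j => by simpa [hJ₀] using hmemJ j
    exact hx ▸ zero_mem _
  have ht : 0 < x j₁ := (hx₀ j₁).lt_of_ne' ((hmemJ j₁).1 hj₁J)
  have hi₀J : i₀ ∈ J := (hmemJ i₀).2 (ht.trans_le (hmax j₁)).ne'
  let y : ι → 𝕜 := fun j => if j ∈ J then x j - x j₁ else 0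
  have hxy : x = y + (x j₁ * #J) • J.centroidWeightsIndicator 𝕜 := by
    have hJ₀ : (#J : 𝕜) ≠ 0 := by exact_mod_cast (card_pos.2 ⟨j₁, hj₁J⟩).ne'
    funext j
    by_cases hj : j ∈ J
    · simp [y, centroidWeightsIndicator_eq_ite, hj, hJ₀]
    · simpa [y, centroidWeightsIndicator_eq_ite, hj] using hmemJ j
  rw [hxy]
  have hc : 0 ≤ x j₁ * #J := mul_nonneg ht.le (Nat.cast_nonneg _)
  have hp : J.centroidWeightsIndicator 𝕜 ∈ PointedCone.hull 𝕜 (apexFaceBarycenters 𝕜 i₀) :=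
    PointedCone.subset_hull ⟨J, hi₀J, rfl⟩
  refine add_mem (ih _ ?_ (fun j => ?_) (fun j => ?_) rfl) (PointedCone.smul_mem _ hc hp)
  · rw [← hk, ← hJ]
    refine (card_le_card fun j hj => ?_).trans_lt (card_erase_lt_of_mem hj₁J)
    have hyj : y j ≠ 0 := (mem_filter.1 hj).2
    by_cases hjJ : j ∈ J
    · exact mem_erase.2 ⟨fun h => hyj (by simp [y, h]), hjJ⟩
    · exact absurd (if_neg hjJ) hyj
  · by_cases hj : j ∈ J
    · simpa [y, hj] using hj₁ j hj
    · simp [y, hj]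
  · by_cases hj : j ∈ J
    · simpa [y, hj, hi₀J] using hmax j
    · simpa [y, hj, hi₀J] using hj₁ i₀ hi₀J

theorem convexHull_apexFaceBarycenters (i₀ : ι) :
    convexHull 𝕜 (apexFaceBarycenters 𝕜 i₀) = pyramidSimplex 𝕜 i₀ := by
  refine (convexHull_min ?_ (convex_pyramidSimplex i₀)).antisymm fun x hx => ?_
  · rintro _ ⟨J, hJ, rfl⟩
    exact centroidWeightsIndicator_mem_pyramidSimplex hJ
  · refine mem_convexHull_of_mem_pointedConeHull (ℓ := ∑ j, LinearMap.proj j) ?_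
      (mem_pointedConeHull_apexFaceBarycenters hx.1.1 hx.2) ?_
    · rintro _ ⟨J, hJ, rfl⟩
      simpa using (centroidWeightsIndicator_mem_pyramidSimplex hJ).1.2
    · simpa using hx.1.2

theorem pyramid_simplex_intersection (n : ℕ) :
    ({x : Fin (n + 1) → ℝ | (∀ j, x j ∈ Set.Icc (0:ℝ) 1) ∧ ∀ j, x j ≤ x (Fin.last n)} ∩
        {x : Fin (n + 1) → ℝ | (∀ j, 0 ≤ x j) ∧ ∑ j, x j = 1}
      = {x : Fin (n + 1) → ℝ |
          ((∀ j, 0 ≤ x j) ∧ ∑ j, x j = 1) ∧ ∀ j, x j ≤ x (Fin.last n)}) ∧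
    ({x : Fin (n + 1) → ℝ |
        ((∀ j, 0 ≤ x j) ∧ ∑ j, x j = 1) ∧ ∀ j, x j ≤ x (Fin.last n)}
      = convexHull ℝ
          {p : Fin (n + 1) → ℝ | ∃ J : Finset (Fin (n + 1)), Fin.last n ∈ J ∧
            p = fun j => if j ∈ J then ((J.card : ℝ))⁻¹ else 0}) := by
  refine ⟨Set.ext fun x => ⟨fun ⟨⟨_, hmax⟩, hx⟩ => ⟨hx, hmax⟩,
    fun ⟨hx, hmax⟩ => ⟨⟨mem_Icc_of_mem_stdSimplex hx, hmax⟩, hx⟩⟩, ?_⟩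
  simp_rw [← centroidWeightsIndicator_eq_ite]
  exact (convexHull_apexFaceBarycenters (Fin.last n)).symm
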